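/- arXiv:1606.05480 — 5 statements merged into one kernel-verified Lean document; each statement's English description precedes it below -/
import Mathlib

section
/- Let (G,σ) and (H,σ') be finite simple graphs with linear orders on their vertex sets, and let τ be any quasi-lexicographic order on V(G□H). Then the coloring produced by the First-Fit coloring of (G□H, lex) coincides (vertex by vertex) with the coloring produced by the First-Fit coloring of (G□H, τ); in particular FF(G□H, lex) = FF(G□H, τ). -/
open SimpleGraph

/-- First-Fit (greedy) coloring of `G` with respect to the vertex ordering given by the
injective position function `ord` (vertex `u` comes before `v` iff `ord u < ord v`).
Each vertex receives the smallest positive integer not used on earlier neighbors. -/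
noncomputable def firstFit {V : Type*} (G : SimpleGraph V) (ord : V → ℕ) : V → ℕ :=
  (InvImage.wf ord Nat.lt_wfRel.wf).fix
    (fun v ih => sInf {c : ℕ | 1 ≤ c ∧ ∀ u, ∀ h : ord u < ord v, G.Adj u v → ih u h ≠ c})

/-- `FFColors G ord` is the number of colors used by the First-Fit coloring. -/
noncomputable def FFColors {V : Type*} [Fintype V] (G : SimpleGraph V) (ord : V → ℕ) : ℕ :=
  (Finset.univ.image (firstFit G ord)).card

open Classical in
/-- First-Fit coloring of `(G, ord)` subject to the pre-coloring `C₀` on the set `S`: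
vertices of `S` keep their pre-assigned colors and are skipped by the scan; every other
vertex receives the smallest positive integer not already assigned (or pre-assigned)
to a neighbor. -/
noncomputable def firstFitWith {V : Type*} (G : SimpleGraph V) (ord : V → ℕ)
    (S : Set V) (C₀ : V → ℕ) : V → ℕ :=
  (InvImage.wf ord Nat.lt_wfRel.wf).fix
    (fun v ih =>
      if v ∈ S then C₀ v
      else sInf {c : ℕ | 1 ≤ c ∧ (∀ u, G.Adj u v → u ∈ S → C₀ u ≠ c) ∧
        ∀ u, ∀ h : ord u < ord v, G.Adj u v → u ∉ S → ih u h ≠ c})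

/-- Position function of the lexicographic order on `V × W` induced by the position
functions `σ` on `V` and `σ'` on `W` (for injective `σ, σ'`: `(u,v)` comes before
`(u',v')` iff `σ u < σ u'`, or `u = u'` and `σ' v < σ' v'`). -/
noncomputable def lexPos {V W : Type*} [Fintype W] (σ : V → ℕ) (σ' : W → ℕ) : V × W → ℕ :=
  fun p => σ p.1 * (Finset.univ.sup σ' + 1) + σ' p.2

/-- A proper coloring with colors in the positive integers. -/
def IsProperColoring {V : Type*} (G : SimpleGraph V) (C : V → ℕ) : Prop :=
  (∀ v, 1 ≤ C v) ∧ ∀ ⦃u v⦄, G.Adj u v → C u ≠ C v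

/-- `D` is a `(C, ord)`-descent: `D = {v} ∪ N` where `C v = y`, `x < y` is a (positive)
color, `N` is the set of neighbors of `v` of color `x`, and every `u ∈ N` comes after
`v` in the order. -/
def IsDescent {V : Type*} (G : SimpleGraph V) (ord : V → ℕ) (C : V → ℕ) (D : Set V) : Prop :=
  ∃ v x, 1 ≤ x ∧ x < C v ∧
    (∀ u, G.Adj u v → C u = x → ord v < ord u) ∧
    D = insert v {u | G.Adj u v ∧ C u = x}

/-- The Grundy number: the maximum of `FFColors G ord` over all vertex orderings. -/
noncomputable def grundy {V : Type*} [Fintype V] (G : SimpleGraph V) : ℕ :=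
  sSup {n | ∃ ord : V → ℕ, Function.Injective ord ∧ FFColors G ord = n}

/-- The independence number of `G`. -/
noncomputable def indepNum {V : Type*} [Fintype V] (G : SimpleGraph V) : ℕ :=
  sSup {n | ∃ s : Finset V, (∀ u ∈ s, ∀ v ∈ s, ¬ G.Adj u v) ∧ s.card = n}

/-- An `m × n` Latin rectangle: entries in `{1, …, n}`, no repeats in rows or columns. -/
def IsLatinRectangle {m n : ℕ} (R : Fin m → Fin n → ℕ) : Prop :=
  (∀ i j, R i j ∈ Finset.Icc 1 n) ∧ (∀ i, Function.Injective (R i)) ∧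
    (∀ j, Function.Injective (fun i => R i j))

/-- `S` is a greedy defining set of the rectangle `R` (cells scanned in lexicographic,
i.e. row-by-row, order): the greedy completion, which skips the cells of `S` (fixed to
their values in `R`) and places in each other cell the smallest positive integer not yet
appearing in its row or column, reproduces `R`.  This is First-Fit on the rook's graph
`K_m □ K_n` subject to the pre-coloring of `S` by `R`. -/
noncomputable def IsRectGDS {m n : ℕ} (R : Fin m → Fin n → ℕ) (S : Set (Fin m × Fin n)) : Prop :=
  firstFitWith ((⊤ : SimpleGraph (Fin m)).boxProd (⊤ : SimpleGraph (Fin n)))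
    (lexPos Fin.val Fin.val) S (fun p => R p.1 p.2) = fun p => R p.1 p.2

/-- The Latin square `L_k` of order `2^k`: the entry in row `i`, column `j` is
`2^k - (i XOR j)`; equivalently the `k`-fold tensor product of `[[2,1],[1,2]]`. -/
def Lsquare (k : ℕ) : Fin (2 ^ k) → Fin (2 ^ k) → ℕ :=
  fun i j => 2 ^ k - (i.val ^^^ j.val)

/-!
The First-Fit colour of a vertex is determined by the colours of its earlier neighbours, so
First-Fit only depends on how the order compares adjacent vertices. Adjacent vertices of
`G □ H` share a coordinate, and on two vertices sharing a coordinate a quasi-lexicographic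
order must compare them exactly as the lexicographic order does.
-/

theorem firstFit_eq_sInf {V : Type*} (G : SimpleGraph V) (ord : V → ℕ) (v : V) :
    firstFit G ord v = sInf {c : ℕ | 1 ≤ c ∧
      ∀ u, ord u < ord v → G.Adj u v → firstFit G ord u ≠ c} := by
  rw [firstFit, WellFounded.fix_eq]

theorem firstFit_congr_of_adj {V : Type*} {G : SimpleGraph V} {ord₁ ord₂ : V → ℕ}
    (h : ∀ u v, G.Adj u v → (ord₁ u < ord₁ v ↔ ord₂ u < ord₂ v)) :
    firstFit G ord₁ = firstFit G ord₂ := by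
  funext v
  induction v using (measure ord₂).wf.induction with
  | h v ih =>
    rw [firstFit_eq_sInf, firstFit_eq_sInf]
    congr 1
    ext c
    refine and_congr_right fun _ => forall_congr' fun u =>
      ⟨fun hu hlt hadj => ?_, fun hu hlt hadj => ?_⟩
    · rw [← ih u hlt]
      exact hu ((h u v hadj).2 hlt) hadj
    · have hlt₂ := (h u v hadj).1 hlt
      rw [ih u hlt₂]
      exact hu hlt₂ hadj

section lexPos

variable {V W : Type*} [Fintype W] (σ : V → ℕ) (σ' : W → ℕ) {p q : V × W}

theorem lexPos_lt_lexPos_iff_of_snd_eq (h : p.2 = q.2) :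
    lexPos σ σ' p < lexPos σ σ' q ↔ σ p.1 < σ q.1 := by
  rw [lexPos, lexPos, h, Nat.add_lt_add_iff_right, Nat.mul_lt_mul_right (Nat.succ_pos _)]

theorem lexPos_lt_lexPos_iff_of_fst_eq (h : p.1 = q.1) :
    lexPos σ σ' p < lexPos σ σ' q ↔ σ' p.2 < σ' q.2 := by
  rw [lexPos, lexPos, h, Nat.add_lt_add_iff_left]

variable {G : SimpleGraph V} {H : SimpleGraph W} {τ : V × W → ℕ}

theorem lexPos_lt_iff_of_quasiLex (hτ : Function.Injective τ)
    (hquasi : ∀ p q : V × W, τ p < τ q → σ p.1 < σ q.1 ∨ σ' p.2 < σ' q.2)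
    (hpq : (G.boxProd H).Adj p q) :
    lexPos σ σ' p < lexPos σ σ' q ↔ τ p < τ q := by
  have hτpq : τ p ≠ τ q := hτ.ne hpq.ne
  have hpq' := hquasi p q
  have hqp := hquasi q p
  rcases boxProd_adj.1 hpq with ⟨-, h⟩ | ⟨-, h⟩
  · rw [lexPos_lt_lexPos_iff_of_snd_eq σ σ' h]
    rw [h] at hpq' hqp
    omega
  · rw [lexPos_lt_lexPos_iff_of_fst_eq σ σ' h]
    rw [h] at hpq' hqp
    omega

end lexPos

theorem firstFit_quasiLex_eq_lex_general {V W : Type*} [Fintype V] [Fintype W]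
    (G : SimpleGraph V) (H : SimpleGraph W)
    (σ : V → ℕ) (σ' : W → ℕ)
    (τ : V × W → ℕ) (hτ : Function.Injective τ)
    (hquasi : ∀ p q : V × W, τ p < τ q → σ p.1 < σ q.1 ∨ σ' p.2 < σ' q.2) :
    firstFit (G.boxProd H) (lexPos σ σ') = firstFit (G.boxProd H) τ ∧
      FFColors (G.boxProd H) (lexPos σ σ') = FFColors (G.boxProd H) τ := by
  have hff : firstFit (G.boxProd H) (lexPos σ σ') = firstFit (G.boxProd H) τ :=
    firstFit_congr_of_adj fun _ _ hpq => lexPos_lt_iff_of_quasiLex σ σ' hτ hquasi hpq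
  exact ⟨hff, by rw [FFColors, FFColors, hff]⟩

/-- For any quasi-lexicographic order `τ` on `V(G □ H)`, the First-Fit
coloring of `(G □ H, lex)` coincides with that of `(G □ H, τ)`; in particular
`FF(G □ H, lex) = FF(G □ H, τ)`. -/
theorem firstFit_quasiLex_eq_lex {V W : Type*} [Fintype V] [Fintype W]
    (G : SimpleGraph V) (H : SimpleGraph W)
    (σ : V → ℕ) (σ' : W → ℕ) (hσ : Function.Injective σ) (hσ' : Function.Injective σ')
    (τ : V × W → ℕ) (hτ : Function.Injective τ)
    (hquasi : ∀ p q : V × W, τ p < τ q → σ p.1 < σ q.1 ∨ σ' p.2 < σ' q.2) :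
    firstFit (G.boxProd H) (lexPos σ σ') = firstFit (G.boxProd H) τ ∧
      FFColors (G.boxProd H) (lexPos σ σ') = FFColors (G.boxProd H) τ :=
  firstFit_quasiLex_eq_lex_general G H σ σ' τ hτ hquasi
end

section
/- For every integer n ≥ 2, the Grundy number of the Cartesian product of two complete graphs of the same order satisfies Γ(K_n □ K_n) = 2n − 2. -/
open SimpleGraph

section FFLemmas

variable {V : Type*} (G : SimpleGraph V) (ord : V → ℕ)

lemma firstFit_eq (v : V) :
    firstFit G ord v =
      sInf {c : ℕ | 1 ≤ c ∧ ∀ u, ord u < ord v → G.Adj u v → firstFit G ord u ≠ c} := by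
  rw [firstFit, WellFounded.fix_eq]

variable [Fintype V]

lemma firstFit_set_nonempty (v : V) :
    {c : ℕ | 1 ≤ c ∧ ∀ u, ord u < ord v → G.Adj u v → firstFit G ord u ≠ c}.Nonempty := by
  classical
  refine ⟨(Finset.univ.image (firstFit G ord)).sup id + 1, Nat.le_add_left _ _, ?_⟩
  intro u _ _ h
  have : firstFit G ord u ≤ (Finset.univ.image (firstFit G ord)).sup id :=
    Finset.le_sup (f := id) (Finset.mem_image_of_mem _ (Finset.mem_univ u))
  omega

lemma firstFit_mem (v : V) :
    1 ≤ firstFit G ord v ∧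
      ∀ u, ord u < ord v → G.Adj u v → firstFit G ord u ≠ firstFit G ord v := by
  have := Nat.sInf_mem (firstFit_set_nonempty G ord v)
  rw [← firstFit_eq] at this
  exact this

lemma firstFit_pos (v : V) : 1 ≤ firstFit G ord v := (firstFit_mem G ord v).1

omit [Fintype V] in
lemma firstFit_grundy {v : V} {γ : ℕ} (h1 : 1 ≤ γ) (h2 : γ < firstFit G ord v) :
    ∃ u, ord u < ord v ∧ G.Adj u v ∧ firstFit G ord u = γ := by
  rw [firstFit_eq] at h2
  have := Nat.notMem_of_lt_sInf h2
  simp only [Set.mem_setOf_eq, not_and, not_forall] at this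
  obtain ⟨u, hu, hadj, hne⟩ := this h1
  exact ⟨u, hu, hadj, not_not.mp hne⟩

lemma firstFit_proper (hord : Function.Injective ord) {u v : V} (h : G.Adj u v) :
    firstFit G ord u ≠ firstFit G ord v := by
  rcases lt_trichotomy (ord u) (ord v) with hlt | heq | hgt
  · exact (firstFit_mem G ord v).2 u hlt h
  · exact absurd (hord heq) (G.ne_of_adj h)
  · exact fun hc => (firstFit_mem G ord u).2 v hgt h.symm hc.symm

omit [Fintype V] in
/-- If `C` is a proper coloring that has the Grundy property with respect to `ord`,
then `C` is the First-Fit coloring. -/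
lemma firstFit_unique (C : V → ℕ)
    (hpos : ∀ v, 1 ≤ C v)
    (hproper : ∀ u v, ord u < ord v → G.Adj u v → C u ≠ C v)
    (hgrundy : ∀ v γ, 1 ≤ γ → γ < C v → ∃ u, ord u < ord v ∧ G.Adj u v ∧ C u = γ) :
    firstFit G ord = C := by
  funext v
  induction v using ((InvImage.wf ord Nat.lt_wfRel.wf)).induction with
  | _ v ih =>
    have hset : {c : ℕ | 1 ≤ c ∧ ∀ u, ord u < ord v → G.Adj u v → firstFit G ord u ≠ c} =
        {c : ℕ | 1 ≤ c ∧ ∀ u, ord u < ord v → G.Adj u v → C u ≠ c} := by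
      ext c
      constructor
      · rintro ⟨h1, h2⟩
        exact ⟨h1, fun u hu hadj => by rw [← ih u hu]; exact h2 u hu hadj⟩
      · rintro ⟨h1, h2⟩
        exact ⟨h1, fun u hu hadj => by rw [ih u hu]; exact h2 u hu hadj⟩
    rw [firstFit_eq, hset]
    have hmem : C v ∈ {c : ℕ | 1 ≤ c ∧ ∀ u, ord u < ord v → G.Adj u v → C u ≠ c} :=
      ⟨hpos v, fun u hu hadj => hproper u v hu hadj⟩
    refine le_antisymm (Nat.sInf_le hmem) ?_
    by_contra hlt
    push_neg at hlt
    have hsmem := Nat.sInf_mem (Set.nonempty_of_mem hmem)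
    obtain ⟨u, hu, hadj, hCu⟩ := hgrundy v _ hsmem.1 hlt
    exact hsmem.2 u hu hadj hCu

end FFLemmas

section Upper

lemma rook_adj {n : ℕ} {x y : Fin n × Fin n} :
    ((⊤ : SimpleGraph (Fin n)).boxProd (⊤ : SimpleGraph (Fin n))).Adj x y ↔
      (x.1 ≠ y.1 ∧ x.2 = y.2) ∨ (x.2 ≠ y.2 ∧ x.1 = y.1) := by
  simp [boxProd_adj]

lemma firstFit_rook_le {n : ℕ} (hn : 2 ≤ n) (ord : Fin n × Fin n → ℕ)
    (hinj : Function.Injective ord) (v : Fin n × Fin n) :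
    firstFit ((⊤ : SimpleGraph (Fin n)).boxProd (⊤ : SimpleGraph (Fin n))) ord v ≤ 2 * n - 2 := by
  classical
  set G := ((⊤ : SimpleGraph (Fin n)).boxProd (⊤ : SimpleGraph (Fin n))) with hG
  by_contra hbig
  push_neg at hbig
  obtain ⟨a, b⟩ := v
  set ff : Fin n × Fin n → ℕ := firstFit G ord with hff
  -- the neighborhood
  set s : Finset (Fin n × Fin n) :=
    ((Finset.univ.erase a) ×ˢ {b}) ∪ ({a} ×ˢ (Finset.univ.erase b)) with hs
  have hmem_s : ∀ u, u ∈ s ↔ G.Adj u (a, b) := by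
    intro u
    simp only [hs, Finset.mem_union, Finset.mem_product, Finset.mem_singleton,
      Finset.mem_erase, Finset.mem_univ, and_true, hG, rook_adj]
    tauto
  have hcard_s : s.card = 2 * n - 2 := by
    rw [hs, Finset.card_union_of_disjoint, Finset.card_product, Finset.card_product]
    · simp only [Finset.card_erase_of_mem (Finset.mem_univ _), Finset.card_univ,
        Finset.card_singleton, Fintype.card_fin]
      omega
    · refine Finset.disjoint_left.mpr ?_
      rintro ⟨x, y⟩ hx hy
      simp only [Finset.mem_product, Finset.mem_singleton, Finset.mem_erase,
        Finset.mem_univ, and_true] at hx hy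
      exact hx.1 hy.1
  -- each color in [1, 2n-2] appears on a neighbor
  have hpick : ∀ γ ∈ Finset.Icc 1 (2 * n - 2), ∃ u, u ∈ s ∧ ff u = γ := by
    intro γ hγ
    rw [Finset.mem_Icc] at hγ
    have hγlt : γ < ff (a, b) := lt_of_le_of_lt hγ.2 hbig
    obtain ⟨u, _, hadj, hu⟩ := firstFit_grundy G ord hγ.1 hγlt
    exact ⟨u, (hmem_s u).mpr hadj, hu⟩
  -- choice of representatives
  choose pick hpick_mem hpick_ff using hpick
  -- every neighbor is a representative
  have hrep : ∀ u ∈ s, ∃ γ, ∃ hγ : γ ∈ Finset.Icc 1 (2 * n - 2), u = pick γ hγ := by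
    refine Finset.surj_on_of_inj_on_of_card_le (fun γ hγ => pick γ hγ)
      (fun γ hγ => hpick_mem γ hγ) ?_ ?_
    · intro γ₁ γ₂ h₁ h₂ heq
      simpa only [hpick_ff] using congrArg ff heq
    · rw [hcard_s, Nat.card_Icc]
      omega
  have hnbr_unique : ∀ u ∈ s, ∀ u' ∈ s, ff u = ff u' → u = u' := by
    intro u hu u' hu' hffeq
    obtain ⟨γ, hγ, rfl⟩ := hrep u hu
    obtain ⟨γ', hγ', rfl⟩ := hrep u' hu'
    rw [hpick_ff γ hγ, hpick_ff γ' hγ'] at hffeq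
    subst hffeq
    rfl
  -- the unique neighbor of color 1
  have h1mem : (1 : ℕ) ∈ Finset.Icc 1 (2 * n - 2) := by
    rw [Finset.mem_Icc]; omega
  set w : Fin n × Fin n := pick 1 h1mem with hw
  have hw_mem : w ∈ s := hpick_mem 1 h1mem
  have hw_ff : ff w = 1 := hpick_ff 1 h1mem
  have hffv : 3 ≤ ff (a, b) := by omega
  -- main pigeonhole, parametrized: we do the two symmetric cases separately below
  have hadj_w : G.Adj w (a, b) := (hmem_s w).mp hw_mem
  rw [hG, rook_adj] at hadj_w
  -- properness
  have hproper : ∀ u u', G.Adj u u' → ff u ≠ ff u' := fun u u' h =>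
    firstFit_proper G ord hinj h
  rcases hadj_w with ⟨hw1, hw2⟩ | ⟨hw2, hw1⟩
  · -- w = (w.1, b), w.1 ≠ a : color 1 lives in column b
    have claim : ∀ j : Fin n, ∃ r : Fin n, r ≠ a ∧ ff (r, j) = 1 := by
      intro j
      by_cases hj : j = b
      · subst hj
        refine ⟨w.1, hw1, ?_⟩
        rw [show (w.1, j) = w from Prod.ext rfl hw2.symm, hw_ff]
      · have hu'mem : ((a, j) : Fin n × Fin n) ∈ s := by
          rw [hmem_s, hG, rook_adj]
          exact Or.inr ⟨hj, rfl⟩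
        have hne1 : ff (a, j) ≠ 1 := by
          intro h1
          have := hnbr_unique _ hu'mem _ hw_mem (by rw [h1, hw_ff])
          rw [← this] at hw2
          exact hj hw2
        have h1lt : 1 < ff (a, j) := lt_of_le_of_ne (firstFit_pos G ord _) (Ne.symm hne1)
        obtain ⟨z, _, hzadj, hz1⟩ := firstFit_grundy G ord le_rfl h1lt
        rw [← hff] at hz1
        rw [hG, rook_adj] at hzadj
        rcases hzadj with ⟨hz1', hz2'⟩ | ⟨hz2', hz1'⟩
        · exact ⟨z.1, by simpa using hz1', by
            rw [show ((z.1 : Fin n), j) = z from Prod.ext rfl (by simpa using hz2'.symm)]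
            exact hz1⟩
        · -- z = (a, z.2), z.2 ≠ j
          exfalso
          by_cases hzb : z.2 = b
          · have hzv : z = (a, b) := Prod.ext (by simpa using hz1') hzb
            rw [hzv] at hz1
            omega
          · have hzs : z ∈ s := by
              rw [hmem_s, hG, rook_adj]
              exact Or.inr ⟨hzb, by simpa using hz1'⟩
            have := hnbr_unique _ hzs _ hw_mem (by rw [hz1, hw_ff])
            rw [this] at hzb
            exact hzb hw2
    choose f hfa hf1 using claim
    have hfinj : Function.Injective f := by
      intro j j' hjj'
      by_contra hne
      have hadj : G.Adj (f j, j) (f j', j') := by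
        rw [hG, rook_adj]
        exact Or.inr ⟨fun h => hne h, hjj'⟩
      exact hproper _ _ hadj (by rw [hf1, hf1])
    have : (Finset.univ : Finset (Fin n)).card ≤ (Finset.univ.erase a).card := by
      refine Finset.card_le_card_of_injOn f (fun j _ => Finset.mem_erase.mpr ⟨hfa j, Finset.mem_univ _⟩)
        (fun x _ y _ h => hfinj h)
    rw [Finset.card_erase_of_mem (Finset.mem_univ _), Finset.card_univ, Fintype.card_fin] at this
    omega
  · -- w = (a, w.2), w.2 ≠ b : color 1 lives in row a
    have claim : ∀ i : Fin n, ∃ c : Fin n, c ≠ b ∧ ff (i, c) = 1 := by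
      intro i
      by_cases hi : i = a
      · subst hi
        refine ⟨w.2, hw2, ?_⟩
        rw [show (i, w.2) = w from Prod.ext hw1.symm rfl, hw_ff]
      · have hu'mem : ((i, b) : Fin n × Fin n) ∈ s := by
          rw [hmem_s, hG, rook_adj]
          exact Or.inl ⟨hi, rfl⟩
        have hne1 : ff (i, b) ≠ 1 := by
          intro h1
          have := hnbr_unique _ hu'mem _ hw_mem (by rw [h1, hw_ff])
          rw [← this] at hw1
          exact hi hw1
        have h1lt : 1 < ff (i, b) := lt_of_le_of_ne (firstFit_pos G ord _) (Ne.symm hne1)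
        obtain ⟨z, _, hzadj, hz1⟩ := firstFit_grundy G ord le_rfl h1lt
        rw [← hff] at hz1
        rw [hG, rook_adj] at hzadj
        rcases hzadj with ⟨hz1', hz2'⟩ | ⟨hz2', hz1'⟩
        · -- z = (z.1, b), z.1 ≠ i : z is in column b hence a neighbor or v itself
          exfalso
          by_cases hza : z.1 = a
          · have hzv : z = (a, b) := Prod.ext hza (by simpa using hz2')
            rw [hzv] at hz1
            omega
          · have hzs : z ∈ s := by
              rw [hmem_s, hG, rook_adj]
              exact Or.inl ⟨hza, by simpa using hz2'⟩
            have := hnbr_unique _ hzs _ hw_mem (by rw [hz1, hw_ff])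
            rw [this] at hza
            exact hza hw1
        · exact ⟨z.2, by simpa using hz2', by
            rw [show ((i : Fin n), z.2) = z from Prod.ext (by simpa using hz1'.symm) rfl]
            exact hz1⟩
    choose f hfb hf1 using claim
    have hfinj : Function.Injective f := by
      intro i i' hii'
      by_contra hne
      have hadj : G.Adj (i, f i) (i', f i') := by
        rw [hG, rook_adj]
        exact Or.inl ⟨fun h => hne h, hii'⟩
      exact hproper _ _ hadj (by rw [hf1, hf1])
    have : (Finset.univ : Finset (Fin n)).card ≤ (Finset.univ.erase b).card := by
      refine Finset.card_le_card_of_injOn f (fun i _ => Finset.mem_erase.mpr ⟨hfb i, Finset.mem_univ _⟩)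
        (fun x _ y _ h => hfinj h)
    rw [Finset.card_erase_of_mem (Finset.mem_univ _), Finset.card_univ, Fintype.card_fin] at this
    omega

end Upper

section Lower

/-- The Grundy coloring of the rook's graph achieving `2n - 2` colors: the top-left
`(n-1) × (n-1)` block is the cyclic Latin square on colors `1, …, n-1`, the last row and
column receive colors `n, …, 2n-2`, and the corner gets color `1`. -/
def rookC (n : ℕ) : Fin n × Fin n → ℕ := fun p =>
  if p.1.val = n - 1 then (if p.2.val = n - 1 then 1 else n + p.2.val)
  else if p.2.val = n - 1 then n + p.1.val
  else (p.1.val + p.2.val) % (n - 1) + 1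

/-- Order the vertices by color. -/
def rookOrd (n : ℕ) : Fin n × Fin n → ℕ := fun p =>
  rookC n p * (n * n) + (p.1.val * n + p.2.val)

lemma mod_helper {m x t : ℕ} (hm : 0 < m) (hx : x ≤ m) (ht : t < m) :
    ((t + m - x) % m + x) % m = t := by
  rw [Nat.mod_add_mod, show t + m - x + x = t + m by omega, Nat.add_mod_right,
    Nat.mod_eq_of_lt ht]

variable {n : ℕ}

lemma rookC_pos (p : Fin n × Fin n) : 1 ≤ rookC n p := by
  unfold rookC
  split <;> split <;> omega

lemma rookC_le (hn : 2 ≤ n) (p : Fin n × Fin n) : rookC n p ≤ 2 * n - 2 := by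
  have h1 := p.1.isLt
  have h2 := p.2.isLt
  have h3 : (p.1.val + p.2.val) % (n - 1) < n - 1 := Nat.mod_lt _ (by omega)
  unfold rookC
  split <;> split <;> omega

lemma rookC_symm (p q : Fin n) : rookC n (p, q) = rookC n (q, p) := by
  unfold rookC
  simp only
  split_ifs <;> first | rfl | omega | (rw [Nat.add_comm p.val q.val])

lemma rookC_row_ne (hn : 2 ≤ n) (i j j' : Fin n) (hjj' : j ≠ j') :
    rookC n (i, j) ≠ rookC n (i, j') := by
  have h1 := i.isLt
  have h2 := j.isLt
  have h3 := j'.isLt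
  have hjv : j.val ≠ j'.val := fun h => hjj' (Fin.ext h)
  have hb1 : (i.val + j.val) % (n - 1) < n - 1 := Nat.mod_lt _ (by omega)
  have hb2 : (i.val + j'.val) % (n - 1) < n - 1 := Nat.mod_lt _ (by omega)
  unfold rookC
  simp only
  by_cases hi : i.val = n - 1 <;> by_cases hj : j.val = n - 1 <;>
    by_cases hj' : j'.val = n - 1 <;>
    simp only [hi, hj, hj', if_true, if_false] <;> try omega
  -- remaining case : both block cells
  intro heq
  have heq' : (i.val + j.val) % (n-1) = (i.val + j'.val) % (n-1) := by omega
  have hmo := Nat.ModEq.add_left_cancel' i.val (heq' : (i.val + j.val) ≡ (i.val + j'.val) [MOD n-1])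
  unfold Nat.ModEq at hmo
  rw [Nat.mod_eq_of_lt (by omega), Nat.mod_eq_of_lt (by omega)] at hmo
  exact hjv hmo

lemma rookC_proper (hn : 2 ≤ n) {u v : Fin n × Fin n}
    (h : ((⊤ : SimpleGraph (Fin n)).boxProd (⊤ : SimpleGraph (Fin n))).Adj u v) :
    rookC n u ≠ rookC n v := by
  rw [rook_adj] at h
  obtain ⟨u1, u2⟩ := u
  obtain ⟨v1, v2⟩ := v
  rcases h with ⟨h1, h2⟩ | ⟨h2, h1⟩
  · simp only at h1 h2
    subst h2
    rw [rookC_symm u1 u2, rookC_symm v1 u2]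
    exact rookC_row_ne hn u2 u1 v1 h1
  · simp only at h1 h2
    subst h1
    exact rookC_row_ne hn u1 u2 v2 h2

lemma rookOrd_lt (p q : Fin n × Fin n) (h : rookC n p < rookC n q) :
    rookOrd n p < rookOrd n q := by
  unfold rookOrd
  have h1 := p.1.isLt
  have h2 := p.2.isLt
  have hp : p.1.val * n + p.2.val < n * n := by
    calc p.1.val * n + p.2.val < p.1.val * n + n := by omega
    _ = (p.1.val + 1) * n := by ring
    _ ≤ n * n := Nat.mul_le_mul_right _ (by omega)
  calc rookC n p * (n * n) + (p.1.val * n + p.2.val)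
      < rookC n p * (n * n) + n * n := by omega
    _ = (rookC n p + 1) * (n * n) := by ring
    _ ≤ rookC n q * (n * n) := Nat.mul_le_mul_right _ (by omega)
    _ ≤ _ := Nat.le_add_right _ _

lemma rookOrd_inj (hn : 2 ≤ n) : Function.Injective (rookOrd n) := by
  intro p q h
  unfold rookOrd at h
  have hp : p.1.val * n + p.2.val < n * n := by
    have h1 := p.1.isLt
    have h2 := p.2.isLt
    calc p.1.val * n + p.2.val < p.1.val * n + n := by omega
    _ = (p.1.val + 1) * n := by ring
    _ ≤ n * n := Nat.mul_le_mul_right _ (by omega)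
  have hq : q.1.val * n + q.2.val < n * n := by
    have h1 := q.1.isLt
    have h2 := q.2.isLt
    calc q.1.val * n + q.2.val < q.1.val * n + n := by omega
    _ = (q.1.val + 1) * n := by ring
    _ ≤ n * n := Nat.mul_le_mul_right _ (by omega)
  have hmod : p.1.val * n + p.2.val = q.1.val * n + q.2.val := by
    have e := congrArg (fun x => x % (n * n)) h
    rw [Nat.mul_comm (rookC n p), Nat.mul_comm (rookC n q)] at e
    rwa [Nat.mul_add_mod, Nat.mul_add_mod, Nat.mod_eq_of_lt hp, Nat.mod_eq_of_lt hq] at e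
  have hmod2 : p.2.val = q.2.val := by
    have e := congrArg (fun x => x % n) hmod
    rw [Nat.mul_comm (p.1.val : ℕ), Nat.mul_comm (q.1.val : ℕ)] at e
    rwa [Nat.mul_add_mod, Nat.mul_add_mod, Nat.mod_eq_of_lt p.2.isLt,
      Nat.mod_eq_of_lt q.2.isLt] at e
  have hdiv : p.1.val = q.1.val := by
    have hmul : p.1.val * n = q.1.val * n := by omega
    exact Nat.eq_of_mul_eq_mul_right (by omega) hmul
  exact Prod.ext (Fin.ext hdiv) (Fin.ext hmod2)

lemma rookC_grundy (hn : 2 ≤ n) (v : Fin n × Fin n) (γ : ℕ) (h1 : 1 ≤ γ)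
    (h2 : γ < rookC n v) :
    ∃ u, ((⊤ : SimpleGraph (Fin n)).boxProd (⊤ : SimpleGraph (Fin n))).Adj u v ∧
      rookC n u = γ := by
  obtain ⟨i, j⟩ := v
  have hi := i.isLt
  have hj := j.isLt
  have hm : 0 < n - 1 := by omega
  -- block witness in row i (for i < n-1, any target γ ≤ n-1)
  have hrow : ∀ (i : Fin n), i.val < n - 1 → γ ≤ n - 1 →
      ∃ j' : Fin n, j'.val < n - 1 ∧ rookC n (i, j') = γ := by
    intro i hi' hγ
    have hjlt : (γ - 1 + (n-1) - i.val) % (n-1) < n - 1 := Nat.mod_lt _ hm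
    refine ⟨⟨(γ - 1 + (n-1) - i.val) % (n-1), by omega⟩, hjlt, ?_⟩
    unfold rookC
    simp only
    rw [if_neg (by omega), if_neg (by simpa using (by omega : ¬((γ - 1 + (n-1) - i.val) % (n-1) = n - 1)))]
    show (i.val + (γ - 1 + (n-1) - i.val) % (n-1)) % (n-1) + 1 = γ
    rw [Nat.add_comm i.val, mod_helper hm (by omega) (by omega)]
    omega
  by_cases hvi : i.val = n - 1 <;> by_cases hvj : j.val = n - 1
  · -- corner : color 1, vacuous
    exfalso
    have : rookC n (i, j) = 1 := by unfold rookC; rw [if_pos hvi, if_pos hvj]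
    omega
  · -- last row, j < n-1 : color n + j
    have hC : rookC n (i, j) = n + j.val := by
      unfold rookC; rw [if_pos hvi, if_neg hvj]
    by_cases hγ : γ ≤ n - 1
    · obtain ⟨j', hj', hCj'⟩ := hrow j (by omega) hγ
      refine ⟨(j', j), ?_, ?_⟩
      · rw [rook_adj]
        exact Or.inl ⟨Fin.ne_of_val_ne (show (j' : Fin n).val ≠ i.val by omega), rfl⟩
      · rw [rookC_symm j' j]
        exact hCj'
    · refine ⟨(i, ⟨γ - n, by omega⟩), ?_, ?_⟩
      · rw [rook_adj]
        exact Or.inr ⟨Fin.ne_of_val_ne (show γ - n ≠ j.val by omega), rfl⟩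
      · unfold rookC
        simp only
        rw [if_pos hvi, if_neg (show ¬((γ:ℕ) - n = n - 1) by omega)]
        show n + (γ - n) = γ
        omega
  · -- last column, i < n-1 : color n + i
    have hC : rookC n (i, j) = n + i.val := by
      unfold rookC; rw [if_neg hvi, if_pos hvj]
    by_cases hγ : γ ≤ n - 1
    · obtain ⟨j', hj', hCj'⟩ := hrow i (by omega) hγ
      refine ⟨(i, j'), ?_, hCj'⟩
      rw [rook_adj]
      exact Or.inr ⟨Fin.ne_of_val_ne (show (j' : Fin n).val ≠ j.val by omega), rfl⟩
    · refine ⟨(⟨γ - n, by omega⟩, j), ?_, ?_⟩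
      · rw [rook_adj]
        exact Or.inl ⟨Fin.ne_of_val_ne (show γ - n ≠ i.val by omega), rfl⟩
      · unfold rookC
        simp only
        rw [if_neg (show ¬((γ:ℕ) - n = n - 1) by omega), if_pos hvj]
        show n + (γ - n) = γ
        omega
  · -- block cell : color (i+j) % (n-1) + 1 ≤ n-1
    have hbound : (i.val + j.val) % (n - 1) < n - 1 := Nat.mod_lt _ hm
    have hC : rookC n (i, j) = (i.val + j.val) % (n - 1) + 1 := by
      unfold rookC; rw [if_neg hvi, if_neg hvj]
    obtain ⟨j', hj', hCj'⟩ := hrow i (by omega) (by omega)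
    refine ⟨(i, j'), ?_, hCj'⟩
    rw [rook_adj]
    refine Or.inr ⟨?_, rfl⟩
    intro hjeq
    rw [show j' = j from hjeq] at hCj'
    omega

end Lower

section Final

variable {n : ℕ}

lemma rook_firstFit_eq_rookC (hn : 2 ≤ n) :
    firstFit ((⊤ : SimpleGraph (Fin n)).boxProd (⊤ : SimpleGraph (Fin n))) (rookOrd n)
      = rookC n := by
  apply firstFit_unique
  · exact rookC_pos
  · exact fun u v _ hadj => rookC_proper hn hadj
  · intro v γ hγ1 hγ2
    obtain ⟨u, hadj, hu⟩ := rookC_grundy hn v γ hγ1 hγ2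
    exact ⟨u, rookOrd_lt u v (by omega), hadj, hu⟩

lemma rook_FFColors (hn : 2 ≤ n) :
    FFColors ((⊤ : SimpleGraph (Fin n)).boxProd (⊤ : SimpleGraph (Fin n))) (rookOrd n)
      = 2 * n - 2 := by
  unfold FFColors
  rw [rook_firstFit_eq_rookC hn]
  have himg : Finset.univ.image (rookC n) = Finset.Icc 1 (2 * n - 2) := by
    apply Finset.ext
    intro γ
    simp only [Finset.mem_image, Finset.mem_univ, true_and, Finset.mem_Icc]
    constructor
    · rintro ⟨p, rfl⟩
      exact ⟨rookC_pos p, rookC_le hn p⟩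
    · rintro ⟨hγ1, hγ2⟩
      by_cases hγ : γ ≤ n - 1
      · refine ⟨(⟨0, by omega⟩, ⟨γ - 1, by omega⟩), ?_⟩
        unfold rookC
        simp only
        rw [if_neg (show ¬((0 : ℕ) = n - 1) by omega),
          if_neg (show ¬(γ - 1 = n - 1) by omega)]
        show (0 + (γ - 1)) % (n - 1) + 1 = γ
        rw [Nat.zero_add, Nat.mod_eq_of_lt (by omega)]
        omega
      · refine ⟨(⟨γ - n, by omega⟩, ⟨n - 1, by omega⟩), ?_⟩
        unfold rookC
        simp only
        rw [if_neg (show ¬(γ - n = n - 1) by omega)]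
        simp only [if_true, if_pos]
        show n + (γ - n) = γ
        omega
  rw [himg, Nat.card_Icc]
  omega

end Final


/-- For every integer `n ≥ 2`, `Γ(K_n □ K_n) = 2n - 2`. -/
theorem grundy_complete_boxProd_self (n : ℕ) (hn : 2 ≤ n) :
    grundy ((⊤ : SimpleGraph (Fin n)).boxProd (⊤ : SimpleGraph (Fin n))) = 2 * n - 2 := by
  unfold grundy
  apply IsGreatest.csSup_eq
  constructor
  · exact ⟨rookOrd n, rookOrd_inj hn, rook_FFColors hn⟩
  · rintro k ⟨ord, hinj, rfl⟩
    unfold FFColors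
    have hsub : Finset.univ.image
        (firstFit ((⊤ : SimpleGraph (Fin n)).boxProd (⊤ : SimpleGraph (Fin n))) ord) ⊆
        Finset.Icc 1 (2 * n - 2) := by
      intro γ hγ
      simp only [Finset.mem_image, Finset.mem_univ, true_and] at hγ
      obtain ⟨p, rfl⟩ := hγ
      rw [Finset.mem_Icc]
      exact ⟨firstFit_pos _ _ p, firstFit_rook_le hn ord hinj p⟩
    calc (Finset.univ.image _).card ≤ (Finset.Icc 1 (2 * n - 2)).card :=
        Finset.card_le_card hsub
      _ = 2 * n - 2 := by rw [Nat.card_Icc]; omega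
end

section
/- For any finite simple graphs G and H with linear orders σ on V(G) and σ' on V(H), the First-Fit coloring of G□H with respect to the induced lexicographic order satisfies FF(G□H, lex) ≤ Γ(G) + Γ(H) − 1. -/
open SimpleGraph

/-!
Under the lexicographic order, First-Fit colors `(u, v)` with `(a - 1) ^^^ (b - 1) + 1`, where
`a` and `b` are the First-Fit colors of `u` in `G` and of `v` in `H`: an earlier neighbour of
`(u, v)` changes exactly one coordinate, so the greedy rule on `G □ H` is the mex rule of
nim-addition. As `x ^^^ y ≤ x + y`, `a ≤ Γ(G)` and `b ≤ Γ(H)`, no color exceeds `Γ(G) + Γ(H) - 1`.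
-/

theorem Nat.xor_le_add (x y : ℕ) : x ^^^ y ≤ x + y := by
  induction x using Nat.strong_induction_on generalizing y with
  | _ x ih =>
    rcases Nat.eq_zero_or_pos x with rfl | hx
    · simp
    · have hhalf : (x ^^^ y) / 2 ≤ x / 2 + y / 2 :=
        Nat.xor_div_two ▸ ih (x / 2) (Nat.div_lt_self hx one_lt_two) (y / 2)
      have hparity : (x ^^^ y) % 2 = (x + y) % 2 := Nat.xor_mod_two_eq
      omega

namespace SimpleGraph

variable {V : Type*} (G : SimpleGraph V) (ord : V → ℕ)

/-- Colors are `0`-based, so that `firstFit G ord - 1` is the greedy coloring and the greedy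
colorings of a product are nim-sums. -/
def IsGreedyColoring (c : V → ℕ) : Prop :=
  ∀ v, (∀ u, ord u < ord v → G.Adj u v → c u ≠ c v) ∧
    ∀ x < c v, ∃ u, ord u < ord v ∧ G.Adj u v ∧ c u = x

variable {G ord} in
theorem IsGreedyColoring.eq {c d : V → ℕ} (hc : G.IsGreedyColoring ord c)
    (hd : G.IsGreedyColoring ord d) : c = d := by
  suffices ∀ n v, ord v = n → c v = d v from funext fun v => this _ v rfl
  intro n
  induction n using Nat.strong_induction_on with
  | _ n ih =>
    -- A smaller color at `v` would occur on an earlier neighbour in the other coloring.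
    have not_lt : ∀ {c d : V → ℕ}, G.IsGreedyColoring ord c → G.IsGreedyColoring ord d →
        (∀ u, ord u < n → c u = d u) → ∀ v, ord v = n → ¬ c v < d v := by
      rintro c d hc hd hcd v rfl hlt
      obtain ⟨u, hu, huv, hdu⟩ := (hd v).2 _ hlt
      exact (hc v).1 u hu huv (hcd u hu ▸ hdu)
    intro v hv
    have hcd : ∀ u, ord u < n → c u = d u := fun u hu => ih _ hu u rfl
    have := not_lt hc hd hcd v hv
    have := not_lt hd hc (fun u hu => (hcd u hu).symm) v hv
    omega

theorem firstFit_eq_sInf (v : V) :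
    firstFit G ord v = sInf {c : ℕ | 1 ≤ c ∧
      ∀ u, ord u < ord v → G.Adj u v → firstFit G ord u ≠ c} := by
  unfold firstFit
  rw [WellFounded.fix_eq]

variable [Fintype V]

theorem firstFit_mem (v : V) :
    firstFit G ord v ∈ {c : ℕ | 1 ≤ c ∧
      ∀ u, ord u < ord v → G.Adj u v → firstFit G ord u ≠ c} := by
  rw [firstFit_eq_sInf G ord]
  refine Nat.sInf_mem ⟨Finset.univ.sup (firstFit G ord) + 1, by omega, fun u _ _ => ?_⟩
  have := Finset.le_sup (f := firstFit G ord) (Finset.mem_univ u)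
  omega

theorem one_le_firstFit (v : V) : 1 ≤ firstFit G ord v :=
  (firstFit_mem G ord v).1

theorem isGreedyColoring_firstFit_sub_one :
    G.IsGreedyColoring ord fun v => firstFit G ord v - 1 := by
  intro v
  beta_reduce
  have hv := one_le_firstFit G ord v
  refine ⟨fun u hu huv => ?_, fun x hx => ?_⟩
  · have := (firstFit_mem G ord v).2 u hu huv
    have := one_le_firstFit G ord u
    omega
  · by_contra! hnone
    have hmem : x + 1 ∈ {c : ℕ | 1 ≤ c ∧
        ∀ u, ord u < ord v → G.Adj u v → firstFit G ord u ≠ c} :=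
      ⟨by omega, fun u hu huv h => hnone u hu huv (by omega)⟩
    have := Nat.sInf_le hmem
    rw [← firstFit_eq_sInf G ord] at this
    omega

variable {G ord} in
theorem IsGreedyColoring.eq_firstFit_sub_one {c : V → ℕ} (hc : G.IsGreedyColoring ord c)
    (v : V) :
    c v = firstFit G ord v - 1 :=
  congrFun (hc.eq (isGreedyColoring_firstFit_sub_one G ord)) v

theorem firstFit_le_FFColors (v : V) : firstFit G ord v ≤ FFColors G ord := by
  have hsub : Finset.Icc 1 (firstFit G ord v) ⊆ Finset.univ.image (firstFit G ord) := by
    intro x hx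
    rw [Finset.mem_Icc] at hx
    rw [Finset.mem_image]
    rcases hx.2.eq_or_lt with rfl | hlt
    · exact ⟨v, Finset.mem_univ v, rfl⟩
    · obtain ⟨u, -, -, hu⟩ := (isGreedyColoring_firstFit_sub_one G ord v).2 (x - 1)
        (by dsimp only; omega)
      beta_reduce at hu
      exact ⟨u, Finset.mem_univ u, by have := one_le_firstFit G ord u; omega⟩
  simpa [FFColors] using Finset.card_le_card hsub

theorem FFColors_le_of_forall_firstFit_le {n : ℕ} (h : ∀ v, firstFit G ord v ≤ n) :
    FFColors G ord ≤ n := by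
  have hsub : Finset.univ.image (firstFit G ord) ⊆ Finset.Icc 1 n := by
    simp only [Finset.subset_iff, Finset.mem_image, Finset.mem_univ, true_and,
      Finset.mem_Icc, forall_exists_index, forall_apply_eq_imp_iff]
    exact fun v => ⟨one_le_firstFit G ord v, h v⟩
  simpa [FFColors] using Finset.card_le_card hsub

theorem FFColors_le_grundy (hord : Function.Injective ord) :
    FFColors G ord ≤ grundy G := by
  refine le_csSup ⟨Fintype.card V, ?_⟩ ⟨ord, hord, rfl⟩
  rintro _ ⟨o, -, rfl⟩
  exact Finset.card_image_le.trans_eq Finset.card_univ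

theorem firstFit_le_grundy (hord : Function.Injective ord) (v : V) :
    firstFit G ord v ≤ grundy G :=
  (firstFit_le_FFColors G ord v).trans (FFColors_le_grundy G ord hord)

end SimpleGraph

section LexPos

variable {V W : Type*} [Fintype W] {σ : V → ℕ} {σ' : W → ℕ}

theorem lexPos_lt_lexPos_of_fst_lt {u u' : V} (w w' : W) (h : σ u' < σ u) :
    lexPos σ σ' (u', w') < lexPos σ σ' (u, w) := by
  have hw' : σ' w' ≤ Finset.univ.sup σ' := Finset.le_sup (Finset.mem_univ w')
  calc lexPos σ σ' (u', w') < (σ u' + 1) * (Finset.univ.sup σ' + 1) := by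
        simp only [lexPos]; nlinarith
    _ ≤ lexPos σ σ' (u, w) := by
        simp only [lexPos]; nlinarith

theorem lexPos_lt_lexPos_fst_eq_iff (u : V) {z v : W} :
    lexPos σ σ' (u, z) < lexPos σ σ' (u, v) ↔ σ' z < σ' v := by
  simp [lexPos]

theorem lexPos_lt_lexPos_snd_eq_iff {u u' : V} (v : W) :
    lexPos σ σ' (u', v) < lexPos σ σ' (u, v) ↔ σ u' < σ u := by
  refine ⟨fun h => ?_, lexPos_lt_lexPos_of_fst_lt v v⟩
  simp only [lexPos, add_lt_add_iff_right] at h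
  exact lt_of_mul_lt_mul_right h (Nat.zero_le _)

end LexPos

namespace SimpleGraph

variable {V W : Type*} [Fintype W] {G : SimpleGraph V} {H : SimpleGraph W}
  {σ : V → ℕ} {σ' : W → ℕ}

theorem IsGreedyColoring.boxProd_xor {c : V → ℕ} {d : W → ℕ} (hc : G.IsGreedyColoring σ c)
    (hd : H.IsGreedyColoring σ' d) :
    (G □ H).IsGreedyColoring (lexPos σ σ') fun p => c p.1 ^^^ d p.2 := by
  rintro ⟨u, v⟩
  refine ⟨?_, fun x hx => ?_⟩
  · rintro ⟨u', z⟩ hlt hadj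
    rcases boxProd_adj.1 hadj with ⟨hG, rfl⟩ | ⟨hH, rfl⟩
    · exact fun h => (hc u).1 u' ((lexPos_lt_lexPos_snd_eq_iff z).1 hlt) hG
        (Nat.xor_left_inj.1 h)
    · exact fun h => (hd v).1 z ((lexPos_lt_lexPos_fst_eq_iff u').1 hlt) hH
        (Nat.xor_right_inj.1 h)
  · rcases Nat.lt_xor_cases hx with h | h
    · obtain ⟨u', hu', hG, hcu'⟩ := (hc u).2 _ h
      exact ⟨(u', v), lexPos_lt_lexPos_of_fst_lt v v hu', boxProd_adj.2 (.inl ⟨hG, rfl⟩),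
        by simp [hcu']⟩
    · obtain ⟨z, hz, hH, hdz⟩ := (hd v).2 _ h
      exact ⟨(u, z), (lexPos_lt_lexPos_fst_eq_iff u).2 hz, boxProd_adj.2 (.inr ⟨hH, rfl⟩),
        by simp [hdz, Nat.xor_comm x]⟩

variable [Fintype V]

theorem firstFit_boxProd_lexPos (p : V × W) :
    firstFit (G □ H) (lexPos σ σ') p =
      ((firstFit G σ p.1 - 1) ^^^ (firstFit H σ' p.2 - 1)) + 1 := by
  have := ((isGreedyColoring_firstFit_sub_one G σ).boxProd_xor
    (isGreedyColoring_firstFit_sub_one H σ')).eq_firstFit_sub_one p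
  have := one_le_firstFit (G □ H) (lexPos σ σ') p
  omega

end SimpleGraph

/-- `FF(G □ H, lex) ≤ Γ(G) + Γ(H) - 1`. -/
theorem FF_boxProd_lex_le_grundy_add {V W : Type*} [Fintype V] [Fintype W]
    (G : SimpleGraph V) (H : SimpleGraph W)
    (σ : V → ℕ) (σ' : W → ℕ) (hσ : Function.Injective σ) (hσ' : Function.Injective σ') :
    FFColors (G.boxProd H) (lexPos σ σ') ≤ grundy G + grundy H - 1 := by
  refine FFColors_le_of_forall_firstFit_le _ _ fun p => ?_
  rw [firstFit_boxProd_lexPos]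
  have := Nat.xor_le_add (firstFit G σ p.1 - 1) (firstFit H σ' p.2 - 1)
  have := firstFit_le_grundy G σ hσ p.1
  have := firstFit_le_grundy H σ' hσ' p.2
  have := one_le_firstFit G σ p.1
  have := one_le_firstFit H σ' p.2
  omega
end

section
/- Let (G,σ) and (H,σ') be finite simple graphs with ordered vertex sets, let τ be any quasi-lexicographic order on V(G□H), and let C be any proper vertex coloring of G□H. Then a subset S ⊆ V(G□H) (pre-colored by the restriction of C) is a greedy defining set for (G□H, lex, C) if and only if it is a greedy defining set for (G□H, τ, C). -/
open SimpleGraph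

open Classical in
theorem firstFitWith_eq {V : Type*} (G : SimpleGraph V) (ord : V → ℕ)
    (S : Set V) (C₀ : V → ℕ) (v : V) :
    firstFitWith G ord S C₀ v =
      if v ∈ S then C₀ v
      else sInf {c : ℕ | 1 ≤ c ∧ (∀ u, G.Adj u v → u ∈ S → C₀ u ≠ c) ∧
        ∀ u, ord u < ord v → G.Adj u v → u ∉ S → firstFitWith G ord S C₀ u ≠ c} :=
  WellFounded.fix_eq _ _ _

theorem ffw_eq_of_adjOrderIso {V : Type*} (G : SimpleGraph V) (ord₁ ord₂ : V → ℕ)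
    (h : ∀ u v, G.Adj u v → (ord₁ u < ord₁ v ↔ ord₂ u < ord₂ v))
    (S : Set V) (C : V → ℕ)
    (h1 : firstFitWith G ord₁ S C = C) :
    firstFitWith G ord₂ S C = C := by
  funext v
  induction v using (InvImage.wf ord₂ Nat.lt_wfRel.wf).induction with
  | _ v ih =>
    rw [firstFitWith_eq]
    by_cases hv : v ∈ S
    · rw [if_pos hv]
    · rw [if_neg hv]
      have h1v := congrFun h1 v
      rw [firstFitWith_eq, if_neg hv] at h1v
      rw [← h1v]
      congr 1
      ext c
      simp only [Set.mem_setOf_eq, and_congr_right_iff]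
      intro _ _
      constructor
      · intro hall u hlt hadj hus
        have hlt2 := (h u v hadj).1 hlt
        rw [congrFun h1 u]
        have := hall u hlt2 hadj hus
        rwa [ih u hlt2] at this
      · intro hall u hlt hadj hus
        rw [ih u hlt]
        have := hall u ((h u v hadj).2 hlt) hadj hus
        rwa [congrFun h1 u] at this

/-- For any quasi-lexicographic order `τ` and any proper coloring `C` of
`G □ H`, a subset `S` (pre-colored by `C`) is a greedy defining set for
`(G □ H, lex, C)` iff it is one for `(G □ H, τ, C)`. -/
theorem gds_lex_iff_gds_quasiLex {V W : Type*} [Fintype V] [Fintype W]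
    (G : SimpleGraph V) (H : SimpleGraph W)
    (σ : V → ℕ) (σ' : W → ℕ) (hσ : Function.Injective σ) (hσ' : Function.Injective σ')
    (τ : V × W → ℕ) (hτ : Function.Injective τ)
    (hquasi : ∀ p q : V × W, τ p < τ q → σ p.1 < σ q.1 ∨ σ' p.2 < σ' q.2)
    (C : V × W → ℕ) (hC : IsProperColoring (G.boxProd H) C)
    (S : Set (V × W)) :
    firstFitWith (G.boxProd H) (lexPos σ σ') S C = C ↔
      firstFitWith (G.boxProd H) τ S C = C := by
  have key : ∀ p q : V × W, (G.boxProd H).Adj p q →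
      (lexPos σ σ' p < lexPos σ σ' q ↔ τ p < τ q) := by
    intro p q hadj
    have hM : σ' p.2 ≤ Finset.univ.sup σ' := Finset.le_sup (Finset.mem_univ _)
    have hMq : σ' q.2 ≤ Finset.univ.sup σ' := Finset.le_sup (Finset.mem_univ _)
    have hne : p ≠ q := hadj.ne
    have htne : τ p ≠ τ q := fun h => hne (hτ h)
    rw [SimpleGraph.boxProd_adj] at hadj
    rcases hadj with ⟨hG, h2⟩ | ⟨hH, h1⟩
    · -- p.2 = q.2, G.Adj p.1 q.1
      have hs2 : σ' p.2 = σ' q.2 := by rw [h2]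
      have hlex : lexPos σ σ' p < lexPos σ σ' q ↔ σ p.1 < σ q.1 := by
        unfold lexPos
        rw [hs2, Nat.add_lt_add_iff_right,
          Nat.mul_lt_mul_right (Nat.succ_pos _)]
      rw [hlex]
      constructor
      · intro hlt
        rcases lt_or_gt_of_ne htne with h | h
        · exact h
        · rcases hquasi q p h with h' | h'
          · omega
          · omega
      · intro hlt
        rcases hquasi p q hlt with h' | h'
        · exact h'
        · omega
    · -- p.1 = q.1, H.Adj p.2 q.2
      have hs1 : σ p.1 = σ q.1 := by rw [h1]
      have hlex : lexPos σ σ' p < lexPos σ σ' q ↔ σ' p.2 < σ' q.2 := by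
        unfold lexPos
        rw [hs1, Nat.add_lt_add_iff_left]
      rw [hlex]
      constructor
      · intro hlt
        rcases lt_or_gt_of_ne htne with h | h
        · exact h
        · rcases hquasi q p h with h' | h'
          · omega
          · omega
      · intro hlt
        rcases hquasi p q hlt with h' | h'
        · omega
        · exact h'
  constructor
  · exact ffw_eq_of_adjOrderIso _ _ _ key S C
  · exact ffw_eq_of_adjOrderIso _ _ _ (fun u v h => (key u v h).symm) S C
end

section
/- Define the sequence d_0 = 0, d_1 = 1, and d_k = 2^{2k−2} + 2^{2k−4} + d_{k−1} + 7·d_{k−2} for k ≥ 2. Then for every k ≥ 0, the Latin square (L_k, lex) of order n = 2^k has a greedy defining set of cardinality at most d_k. -/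
open SimpleGraph

/-!
Encode the cell `(i, j)` of `L_k` by its row `i` and `m = i XOR j`, so that its entry is
`2^k - m`. The greedy completion reproduces the entry of a cell `(i, m)` that is not prefilled
provided that, for every `m < m' < 2^k`, the cell of entry `2^k - m'` in its row, `(i, m')`, or
the one in its column, `(i XOR m XOR m', m')`, is prefilled or scanned earlier. If `b` is the
top bit in which `m` and `m'` differ, the row cell is scanned earlier exactly when bit `b` of `i`
is set; otherwise one of the two has to be prefilled.

The cells left free form the set `T_k` obtained by reading the bits of `i` from the top in
blocks `1` and `0a`, where a block `0a` forces the bit of `m` at the position of its `0` to be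
`a`. When bit `b` of `i` is clear, `(i, m)`, `(i, m')` and `(i XOR m XOR m', m')` cannot all be
parsed, and `|T_(k+2)| = 2 |T_(k+1)| + 4 |T_k|` keeps the `4^k - |T_k|` prefilled cells below
`d_k`.
-/

open SimpleGraph Finset

theorem firstFitWith_eq_of_forall_lt {V : Type*} (G : SimpleGraph V) (ord : V → ℕ)
    (S : Set V) (C : V → ℕ) (hC : IsProperColoring G C)
    (hcover : ∀ v ∉ S, ∀ c, 1 ≤ c → c < C v →
      ∃ u, G.Adj u v ∧ C u = c ∧ (u ∈ S ∨ ord u < ord v)) :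
    firstFitWith G ord S C = C := by
  classical
  funext v
  induction v using (InvImage.wf ord Nat.lt_wfRel.wf).induction with
  | _ v ih =>
  rw [firstFitWith, WellFounded.fix_eq, ← firstFitWith]
  split_ifs with hv
  · rfl
  have hmem : C v ∈ {c : ℕ | 1 ≤ c ∧ (∀ u, G.Adj u v → u ∈ S → C u ≠ c) ∧
      ∀ u, ord u < ord v → G.Adj u v → u ∉ S → firstFitWith G ord S C u ≠ c} :=
    ⟨hC.1 v, fun u huv _ => hC.2 huv, fun u hlt huv _ => (ih u hlt).symm ▸ hC.2 huv⟩
  refine le_antisymm (Nat.sInf_le hmem) (le_csInf ⟨_, hmem⟩ fun c ⟨hc1, hcS, hcord⟩ => ?_)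
  by_contra! hlt
  obtain ⟨u, huv, rfl, hu⟩ := hcover v hv c hc1 hlt
  by_cases huS : u ∈ S
  · exact hcS u huv huS rfl
  · exact hcord u (hu.resolve_left huS) huv huS (ih u (hu.resolve_left huS))

theorem lexPos_val_lt_iff {m n : ℕ} (p q : Fin m × Fin n) :
    lexPos Fin.val Fin.val p < lexPos Fin.val Fin.val q ↔
      p.1 < q.1 ∨ p.1 = q.1 ∧ p.2 < q.2 := by
  have hN : ∀ j : Fin n, (j : ℕ) < univ.sup (Fin.val : Fin n → ℕ) + 1 :=
    fun j => Nat.lt_succ_of_le (le_sup (mem_univ j))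
  have := hN p.2; have := hN q.2
  simp only [lexPos, Fin.lt_def, Fin.ext_iff]
  constructor
  · intro h
    rcases lt_trichotomy (p.1 : ℕ) q.1 with h1 | h1 | h1
    · exact Or.inl h1
    · rw [h1] at h; exact Or.inr ⟨h1, by omega⟩
    · nlinarith
  · rintro (h | ⟨h1, h2⟩)
    · nlinarith
    · rw [h1]; omega

theorem IsLatinRectangle.isProperColoring {m n : ℕ} {R : Fin m → Fin n → ℕ}
    (hR : IsLatinRectangle R) :
    IsProperColoring ((⊤ : SimpleGraph (Fin m)).boxProd (⊤ : SimpleGraph (Fin n)))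
      (fun p => R p.1 p.2) := by
  refine ⟨fun p => (mem_Icc.1 (hR.1 p.1 p.2)).1, fun u v huv => ?_⟩
  show R u.1 u.2 ≠ R v.1 v.2
  rcases boxProd_adj.1 huv with ⟨hne, h2⟩ | ⟨hne, h1⟩
  · rw [h2]; exact fun h => hne (hR.2.2 v.2 h)
  · rw [h1]; exact fun h => hne (hR.2.1 v.1 h)

theorem Nat.exists_testBit_of_lt {x y : ℕ} (h : x < y) :
    ∃ b, x.testBit b = false ∧ y.testBit b = true ∧ ∀ j, b < j → x.testBit j = y.testBit j := by
  obtain ⟨b, hb, hhigh⟩ := Nat.exists_most_significant_bit (xor_ne_zero_iff.2 h.ne)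
  have hagree : ∀ j, b < j → x.testBit j = y.testBit j := fun j hj => by
    simpa [Nat.testBit_xor] using hhigh j hj
  rw [Nat.testBit_xor] at hb
  cases hx : x.testBit b
  · exact ⟨b, hx, by simpa [hx] using hb, hagree⟩
  · have hy : y.testBit b = false := by simpa [hx] using hb
    exact absurd (Nat.lt_of_testBit b hy hx fun j hj => (hagree j hj).symm) h.not_gt

theorem sum_range_two_pow_succ {M : Type*} [AddCommMonoid M] (s : ℕ) (f : ℕ → M) :
    ∑ x ∈ range (2 ^ (s + 1)), f x = ∑ x ∈ range (2 ^ s), (f x + f (2 ^ s + x)) := by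
  rw [pow_succ, mul_two, sum_range_add, sum_add_distrib]

theorem sum_range_two_pow_succ_of_eq {M : Type*} [AddCommMonoid M] {s : ℕ} {f : ℕ → M}
    (hf : ∀ x < 2 ^ s, f (2 ^ s + x) = f x) :
    ∑ x ∈ range (2 ^ (s + 1)), f x = 2 • ∑ x ∈ range (2 ^ s), f x := by
  rw [sum_range_two_pow_succ, two_nsmul, ← sum_add_distrib]
  exact sum_congr rfl fun x hx => by rw [hf x (mem_range.1 hx)]

theorem sum_range_two_pow_xor_left {M : Type*} [AddCommMonoid M] {k i : ℕ} (hi : i < 2 ^ k)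
    (f : ℕ → M) : ∑ j ∈ range (2 ^ k), f (i ^^^ j) = ∑ m ∈ range (2 ^ k), f m :=
  sum_nbij' (i ^^^ ·) (i ^^^ ·)
    (fun _ hj => mem_range.2 (Nat.xor_lt_two_pow hi (mem_range.1 hj)))
    (fun _ hj => mem_range.2 (Nat.xor_lt_two_pow hi (mem_range.1 hj)))
    (fun j _ => xor_cancel_left i j) (fun j _ => xor_cancel_left i j) fun _ _ => rfl

/-- The set `T_k` of encoded cells `(i, m)`; a trailing `0` of `i` (case `k = 1`) counts as the
block `00`. -/
def IsFreeCell : ℕ → ℕ → ℕ → Prop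
  | 0, _, _ => True
  | 1, i, m => i.testBit 0 = false → m.testBit 0 = false
  | k + 2, i, m =>
      if i.testBit (k + 1) then IsFreeCell (k + 1) i m
      else i.testBit k = m.testBit (k + 1) ∧ IsFreeCell k i m

theorem isFreeCell_congr : ∀ {k i i' m m' : ℕ}, (∀ j < k, i.testBit j = i'.testBit j) →
    (∀ j < k, m.testBit j = m'.testBit j) → (IsFreeCell k i m ↔ IsFreeCell k i' m')
  | 0, _, _, _, _, _, _ => Iff.rfl
  | 1, _, _, _, _, hi, hm => by simp only [IsFreeCell, hi 0 one_pos, hm 0 one_pos]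
  | k + 2, _, _, _, _, hi, hm => by
    simp only [IsFreeCell, hi (k + 1) (by omega), hi k (by omega), hm (k + 1) (by omega),
      isFreeCell_congr (k := k + 1) (fun j hj => hi j (by omega)) (fun j hj => hm j (by omega)),
      isFreeCell_congr (k := k) (fun j hj => hi j (by omega)) (fun j hj => hm j (by omega))]

/-- Either `b` starts a block `0a` of `i`, and then `m` and `m'` both carry `a` at `b`, or it is
the second position of a block `0a` starting at `b + 1`, and then the bits of `m` and `m'` at
`b + 1`, which agree, would have to equal both `i.testBit b` and `i'.testBit b`. -/
theorem IsFreeCell.false_of_conflict : ∀ {k i i' m m' b : ℕ}, b < k →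
    i.testBit b = false → i'.testBit b = true → m.testBit b ≠ m'.testBit b →
    (∀ j, b < j → j < k → i.testBit j = i'.testBit j ∧ m.testBit j = m'.testBit j) →
    IsFreeCell k i m → IsFreeCell k i m' → IsFreeCell k i' m' → False
  | 0, _, _, _, _, _, hb, _, _, _, _, _, _, _ => by omega
  | 1, _, _, _, _, b, hb, hi, _, hm, _, h₁, h₂, _ => by
    obtain rfl : b = 0 := by omega
    exact hm ((h₁ hi).trans (h₂ hi).symm)
  | k + 2, i, i', m, m', b, hb, hi, hi', hm, hagree, h₁, h₂, h₃ => by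
    by_cases hbk : b = k + 1
    · subst hbk
      simp only [IsFreeCell, hi, Bool.false_eq_true, if_false] at h₁ h₂
      exact hm (h₁.1.symm.trans h₂.1)
    obtain ⟨hi₁, hm₁⟩ := hagree (k + 1) (by omega) (by omega)
    cases htop : i.testBit (k + 1)
    · simp only [IsFreeCell, htop, ← hi₁, Bool.false_eq_true, if_false] at h₁ h₂ h₃
      by_cases hbk' : b = k
      · subst hbk'
        have hib : i.testBit b = i'.testBit b := by rw [h₁.1, h₃.1, hm₁]
        simp [hi, hi'] at hib
      exact h₁.2.false_of_conflict (by omega) hi hi' hm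
        (fun j hbj hjk => hagree j hbj (by omega)) h₂.2 h₃.2
    · simp only [IsFreeCell, htop, ← hi₁, if_true] at h₁ h₂ h₃
      exact h₁.false_of_conflict (by omega) hi hi' hm
        (fun j hbj hjk => hagree j hbj (by omega)) h₂ h₃

theorem IsFreeCell.xor_lt_or_not_isFreeCell {k i m m' : ℕ} (hw : IsFreeCell k i m)
    (hmm' : m < m') (hm' : m' < 2 ^ k) :
    i ^^^ m' < i ^^^ m ∨ ¬IsFreeCell k i m' ∨ ¬IsFreeCell k (i ^^^ (m ^^^ m')) m' := by
  obtain ⟨b, hmb, hm'b, hagree⟩ := Nat.exists_testBit_of_lt hmm'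
  cases hib : i.testBit b
  · have hbk : b < k := (Nat.pow_lt_pow_iff_right (by norm_num)).1
      ((Nat.ge_two_pow_of_testBit hm'b).trans_lt hm')
    refine Or.inr (not_and_or.1 fun ⟨h₁, h₃⟩ => hw.false_of_conflict hbk hib ?_ ?_ ?_ h₁ h₃)
    · simp [hib, hmb, hm'b]
    · simp [hmb, hm'b]
    · intro j hbj _
      simp [hagree j hbj]
  · exact Or.inl (Nat.lt_of_testBit b (by simp [hib, hm'b]) (by simp [hib, hmb])
      fun j hj => by simp [hagree j hj])

theorem isFreeCell_two_pow_add_left {k s i m : ℕ} (hks : k ≤ s) :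
    IsFreeCell k (2 ^ s + i) m ↔ IsFreeCell k i m :=
  isFreeCell_congr (fun _ hj => Nat.testBit_two_pow_add_gt (by omega) i) fun _ _ => rfl

theorem isFreeCell_two_pow_add_right {k s i m : ℕ} (hks : k ≤ s) :
    IsFreeCell k i (2 ^ s + m) ↔ IsFreeCell k i m :=
  isFreeCell_congr (fun _ _ => rfl) fun _ hj => Nat.testBit_two_pow_add_gt (by omega) m

theorem isFreeCell_add_two_of_lt {k i m : ℕ} (hi : i < 2 ^ (k + 1)) :
    IsFreeCell (k + 2) i m ↔ i.testBit k = m.testBit (k + 1) ∧ IsFreeCell k i m := by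
  simp [IsFreeCell, Nat.testBit_lt_two_pow hi]

theorem isFreeCell_add_two_two_pow_add {k i m : ℕ} (hi : i < 2 ^ (k + 1)) :
    IsFreeCell (k + 2) (2 ^ (k + 1) + i) m ↔ IsFreeCell (k + 1) i m := by
  simp [IsFreeCell, Nat.testBit_two_pow_add_eq, Nat.testBit_lt_two_pow hi,
    isFreeCell_two_pow_add_left le_rfl]

section Counting

open Classical

noncomputable def freeCount (k : ℕ) : ℕ :=
  ∑ i ∈ range (2 ^ k), ∑ m ∈ range (2 ^ k), if IsFreeCell k i m then 1 else 0

theorem freeCount_zero : freeCount 0 = 1 := by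
  simp [freeCount, IsFreeCell]

theorem freeCount_one : freeCount 1 = 3 := by
  simp [freeCount, IsFreeCell, sum_range_succ, -sum_boole]

theorem sum_range_isFreeCell_doubling {k s i : ℕ} (hks : k ≤ s) :
    ∑ m ∈ range (2 ^ (s + 1)), (if IsFreeCell k i m then 1 else 0) =
      2 * ∑ m ∈ range (2 ^ s), if IsFreeCell k i m then 1 else 0 := by
  rw [sum_range_two_pow_succ_of_eq fun m _ => by rw [isFreeCell_two_pow_add_right hks],
    smul_eq_mul]

theorem sum_range_isFreeCell_add_two_of_lt {k i : ℕ} (hi : i < 2 ^ (k + 1)) :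
    ∑ m ∈ range (2 ^ (k + 2)), (if IsFreeCell (k + 2) i m then 1 else 0) =
      ∑ m ∈ range (2 ^ (k + 1)), if IsFreeCell k i m then 1 else 0 := by
  rw [sum_range_two_pow_succ]
  refine sum_congr rfl fun m hm => ?_
  have hm : m < 2 ^ (k + 1) := mem_range.1 hm
  simp only [isFreeCell_add_two_of_lt hi, Nat.testBit_two_pow_add_eq, Nat.testBit_lt_two_pow hm,
    isFreeCell_two_pow_add_right k.le_succ]
  cases i.testBit k <;> simp

theorem freeCount_add_two (k : ℕ) :
    freeCount (k + 2) = 2 * freeCount (k + 1) + 4 * freeCount k := by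
  have hsquare : ∑ i ∈ range (2 ^ (k + 1)), ∑ m ∈ range (2 ^ (k + 1)),
      (if IsFreeCell k i m then 1 else 0) = 4 * freeCount k := by
    simp only [sum_range_isFreeCell_doubling le_rfl, ← mul_sum]
    rw [sum_range_two_pow_succ_of_eq fun i _ => by simp only [isFreeCell_two_pow_add_left le_rfl],
      smul_eq_mul, freeCount]
    ring
  calc freeCount (k + 2)
      = ∑ i ∈ range (2 ^ (k + 1)),
          (∑ m ∈ range (2 ^ (k + 2)), (if IsFreeCell (k + 2) i m then 1 else 0) +
            ∑ m ∈ range (2 ^ (k + 2)), if IsFreeCell (k + 2) (2 ^ (k + 1) + i) m then 1 else 0) :=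
        sum_range_two_pow_succ _ _
    _ = ∑ i ∈ range (2 ^ (k + 1)),
          (∑ m ∈ range (2 ^ (k + 1)), (if IsFreeCell k i m then 1 else 0) +
            2 * ∑ m ∈ range (2 ^ (k + 1)), if IsFreeCell (k + 1) i m then 1 else 0) := by
        refine sum_congr rfl fun i hi => ?_
        have hi := mem_range.1 hi
        simp only [sum_range_isFreeCell_add_two_of_lt hi, isFreeCell_add_two_two_pow_add hi,
          sum_range_isFreeCell_doubling le_rfl]
    _ = 2 * freeCount (k + 1) + 4 * freeCount k := by
        rw [sum_add_distrib, hsquare, ← mul_sum, add_comm]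
        rfl

theorem freeCount_succ_bounds (k : ℕ) :
    3 * freeCount k ≤ freeCount (k + 1) ∧ freeCount (k + 1) ≤ 4 * freeCount k := by
  induction k with
  | zero => simp [freeCount_zero, freeCount_one]
  | succ k ih => rw [freeCount_add_two]; omega

theorem four_pow_le_add_freeCount (d : ℕ → ℕ) (hd0 : d 0 = 0) (hd1 : d 1 = 1)
    (hdk : ∀ k, 2 ≤ k →
      d k = 2 ^ (2 * k - 2) + 2 ^ (2 * k - 4) + d (k - 1) + 7 * d (k - 2)) :
    ∀ k, 4 ^ k ≤ d k + freeCount k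
  | 0 => by simp [hd0, freeCount_zero]
  | 1 => by simp [hd1, freeCount_one]
  | k + 2 => by
    have ih₀ := four_pow_le_add_freeCount d hd0 hd1 hdk k
    have ih₁ := four_pow_le_add_freeCount d hd0 hd1 hdk (k + 1)
    have hratio := (freeCount_succ_bounds k).1
    have hd := hdk (k + 2) (by omega)
    rw [show 2 * (k + 2) - 2 = 2 * (k + 1) by omega, show 2 * (k + 2) - 4 = 2 * k by omega,
      show k + 2 - 1 = k + 1 by omega, Nat.add_sub_cancel, pow_mul, pow_mul] at hd
    rw [hd, freeCount_add_two, show (2 : ℕ) ^ 2 = 4 by rfl, pow_succ 4 (k + 1)]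
    rw [pow_succ] at ih₁ ⊢
    omega

noncomputable def freeCells (k : ℕ) : Finset (Fin (2 ^ k) × Fin (2 ^ k)) :=
  {p | IsFreeCell k p.1 (p.1 ^^^ p.2)}

theorem card_freeCells (k : ℕ) : #(freeCells k) = freeCount k := by
  rw [freeCells, card_filter, Fintype.sum_prod_type, freeCount,
    ← Fin.sum_univ_eq_sum_range (fun i => ∑ m ∈ range (2 ^ k), if IsFreeCell k i m then 1 else 0)]
  refine sum_congr rfl fun i _ => ?_
  rw [← sum_range_two_pow_xor_left i.2,
    ← Fin.sum_univ_eq_sum_range (fun j => if IsFreeCell k i (i ^^^ j) then 1 else 0)]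

end Counting

theorem isLatinRectangle_Lsquare (k : ℕ) : IsLatinRectangle (Lsquare k) := by
  have hlt (i j : Fin (2 ^ k)) : (i : ℕ) ^^^ j < 2 ^ k := Nat.xor_lt_two_pow i.2 j.2
  refine ⟨fun i j => mem_Icc.2 ⟨?_, Nat.sub_le _ _⟩, fun i j j' h => ?_, fun j i i' h => ?_⟩
  · have := hlt i j; simp only [Lsquare]; omega
  · have := hlt i j; have := hlt i j'
    simp only [Lsquare] at h
    exact Fin.ext (xor_right_involutive (i : ℕ) |>.injective (by omega))
  · have := hlt i j; have := hlt i' j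
    simp only [Lsquare] at h
    exact Fin.ext (xor_left_involutive (j : ℕ) |>.injective (by omega))

theorem isRectGDS_compl_freeCells (k : ℕ) : IsRectGDS (Lsquare k) ↑(freeCells k)ᶜ := by
  refine firstFitWith_eq_of_forall_lt _ _ _ _ (isLatinRectangle_Lsquare k).isProperColoring ?_
  rintro ⟨i, j⟩ hw c hc hlt
  have hw : IsFreeCell k i (i ^^^ j) := by simpa [freeCells] using hw
  set m := (i : ℕ) ^^^ j with hm
  have hj : (j : ℕ) = i ^^^ m := (xor_cancel_left (i : ℕ) j).symm
  have hmk : m < 2 ^ k := Nat.xor_lt_two_pow i.2 j.2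
  have hLw : Lsquare k i j = 2 ^ k - m := rfl
  change c < Lsquare k i j at hlt
  set m' := 2 ^ k - c
  have hmm' : m < m' := by omega
  have hm'k : m' < 2 ^ k := by omega
  let j₁ : Fin (2 ^ k) := ⟨i ^^^ m', Nat.xor_lt_two_pow i.2 hm'k⟩
  let i₂ : Fin (2 ^ k) := ⟨i ^^^ (m ^^^ m'), Nat.xor_lt_two_pow i.2 (Nat.xor_lt_two_pow hmk hm'k)⟩
  have hc₁ : Lsquare k i j₁ = c := by
    simp only [Lsquare, j₁, xor_cancel_left]; omega
  have hxor₂ : (i₂ : ℕ) ^^^ j = m' := by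
    change (i : ℕ) ^^^ (m ^^^ m') ^^^ j = m'
    rw [hm, ← Nat.xor_assoc, xor_cancel_left, Nat.xor_comm, xor_cancel_left]
  have hc₂ : Lsquare k i₂ j = c := by
    simp only [Lsquare, hxor₂]; omega
  have hadj₁ : ((⊤ : SimpleGraph _).boxProd ⊤).Adj (i, j₁) (i, j) :=
    boxProd_adj_right.2 (top_adj _ _ |>.2 fun h => by rw [h] at hc₁; omega)
  have hadj₂ : ((⊤ : SimpleGraph _).boxProd ⊤).Adj (i₂, j) (i, j) :=
    boxProd_adj_left.2 (top_adj _ _ |>.2 fun h => by rw [h] at hc₂; omega)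
  rcases hw.xor_lt_or_not_isFreeCell hmm' hm'k with hlt₁ | hfree₁ | hfree₂
  · refine ⟨(i, j₁), hadj₁, hc₁, Or.inr ((lexPos_val_lt_iff _ _).2 (Or.inr ⟨rfl, ?_⟩))⟩
    rw [Fin.lt_def, hj]; exact hlt₁
  · exact ⟨(i, j₁), hadj₁, hc₁, Or.inl (by simpa [freeCells, j₁] using hfree₁)⟩
  · exact ⟨(i₂, j), hadj₂, hc₂, Or.inl (by simpa [freeCells, hxor₂] using hfree₂)⟩

/-- With `d_0 = 0`, `d_1 = 1`, and
`d_k = 2^(2k-2) + 2^(2k-4) + d_(k-1) + 7·d_(k-2)` for `k ≥ 2`, the Latin square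
`(L_k, lex)` of order `2^k` has a greedy defining set of cardinality at most `d_k`. -/
theorem Lk_gds_upper_bound (d : ℕ → ℕ) (hd0 : d 0 = 0) (hd1 : d 1 = 1)
    (hdk : ∀ k, 2 ≤ k →
      d k = 2 ^ (2 * k - 2) + 2 ^ (2 * k - 4) + d (k - 1) + 7 * d (k - 2)) :
    ∀ k : ℕ, ∃ S : Finset (Fin (2 ^ k) × Fin (2 ^ k)),
      IsRectGDS (Lsquare k) ↑S ∧ S.card ≤ d k := by
  intro k
  refine ⟨(freeCells k)ᶜ, isRectGDS_compl_freeCells k, ?_⟩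
  have hcells : Fintype.card (Fin (2 ^ k) × Fin (2 ^ k)) = 4 ^ k := by
    rw [Fintype.card_prod, Fintype.card_fin, ← mul_pow]; norm_num
  have := four_pow_le_add_freeCount d hd0 hd1 hdk k
  rw [card_compl, hcells, card_freeCells]
  omega
end
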